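/- arXiv:0812.2597 — 5 statements merged into one kernel-verified Lean document; each statement's English description precedes it below -/
import Mathlib

section
/- Let G be a simple graph on n ≥ 2 vertices with at least one edge. Then S(G) ≥ 0, and S(G) = 0 if and only if G has exactly one edge, i.e., G is the disjoint union of K₂ with n−2 isolated vertices. -/
open Finset Matrix

variable {V : Type*}

/-- The degree sum `d_G = Tr(Δ(G)) = 2|E(G)|` of a graph. -/
def degreeSum [Fintype V] (G : SimpleGraph V) [DecidableRel G.Adj] : ℕ :=
  ∑ v : V, G.degree v

/-- The density matrix `ρ_G = L(G)/d_G` of a graph. -/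
noncomputable def densityMatrix [Fintype V] [DecidableEq V]
    (G : SimpleGraph V) [DecidableRel G.Adj] : Matrix V V ℝ :=
  ((degreeSum G : ℝ))⁻¹ • G.lapMatrix ℝ

/-- The von Neumann entropy `-∑ λᵢ log₂ λᵢ` of a (hermitian) matrix, computed
from its eigenvalues; the convention `0 log₂ 0 = 0` holds since `Real.logb 2 0 = 0`. -/
noncomputable def matEntropy [Fintype V] [DecidableEq V] (ρ : Matrix V V ℝ) : ℝ :=
  if h : ρ.IsHermitian then -∑ i : V, h.eigenvalues i * Real.logb 2 (h.eigenvalues i) else 0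

/-- The von Neumann entropy `S(G)` of a graph. -/
noncomputable def graphEntropy [Fintype V] [DecidableEq V]
    (G : SimpleGraph V) [DecidableRel G.Adj] : ℝ :=
  matEntropy (densityMatrix G)

/-!
The eigenvalues `pᵢ` of `ρ_G` form a probability vector, because `ρ_G` is positive semidefinite
of trace one. Each term `-pᵢ log₂ pᵢ` is then nonnegative and vanishes exactly when
`pᵢ ∈ {0, 1}`, so `S(G) = 0` iff `∑ pᵢ² = ∑ pᵢ = 1`, i.e. iff `Tr(ρ_G²) = 1`. Expanding
`L² = (Δ - A)²` gives `Tr(L²) = ∑ d_v² + d_G`, and since every degree is at most `m = |E(G)|`,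
`∑ d_v² ≤ 2m²`; hence `∑ d_v² + 2m = 4m²` forces `m = 1`.
-/

namespace Real

variable {ι : Type*} {b x : ℝ}

lemma mul_logb_eq_zero_iff (hb : 1 < b) (hx : 0 ≤ x) : x * logb b x = 0 ↔ x = 0 ∨ x = 1 := by
  rw [mul_eq_zero, logb_eq_zero]
  constructor
  · rintro (h | h | h | h | h | h | h)
    all_goals first | exact .inl h | exact .inr h | linarith
  · rintro (h | h) <;> simp [h]

lemma mul_logb_nonpos (hb : 1 < b) (hx₀ : 0 ≤ x) (hx₁ : x ≤ 1) : x * logb b x ≤ 0 :=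
  mul_nonpos_of_nonneg_of_nonpos hx₀ (logb_nonpos hb hx₀ hx₁)

lemma neg_sum_mul_logb_nonneg (s : Finset ι) {p : ι → ℝ} (hb : 1 < b)
    (h0 : ∀ i ∈ s, 0 ≤ p i) (h1 : ∀ i ∈ s, p i ≤ 1) :
    0 ≤ -∑ i ∈ s, p i * logb b (p i) :=
  neg_nonneg.2 <| Finset.sum_nonpos fun i hi ↦ mul_logb_nonpos hb (h0 i hi) (h1 i hi)

lemma neg_sum_mul_logb_eq_zero_iff (s : Finset ι) {p : ι → ℝ} (hb : 1 < b)
    (h0 : ∀ i ∈ s, 0 ≤ p i) (h1 : ∀ i ∈ s, p i ≤ 1) :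
    -∑ i ∈ s, p i * logb b (p i) = 0 ↔ ∑ i ∈ s, p i ^ 2 = ∑ i ∈ s, p i := by
  have hterm : ∀ i ∈ s, p i * logb b (p i) ≤ 0 := fun i hi ↦
    mul_logb_nonpos hb (h0 i hi) (h1 i hi)
  have hgap : ∀ i ∈ s, 0 ≤ p i - p i ^ 2 := fun i hi ↦ by nlinarith [h0 i hi, h1 i hi]
  calc -∑ i ∈ s, p i * logb b (p i) = 0 ↔ ∀ i ∈ s, p i * logb b (p i) = 0 := by
        rw [neg_eq_zero, Finset.sum_eq_zero_iff_of_nonpos hterm]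
    _ ↔ ∀ i ∈ s, p i - p i ^ 2 = 0 := forall₂_congr fun i hi ↦ by
        rw [mul_logb_eq_zero_iff hb (h0 i hi), show p i - p i ^ 2 = p i * (1 - p i) by ring,
          mul_eq_zero, sub_eq_zero, eq_comm (a := 1)]
    _ ↔ ∑ i ∈ s, (p i - p i ^ 2) = 0 := (Finset.sum_eq_zero_iff_of_nonneg hgap).symm
    _ ↔ _ := by rw [Finset.sum_sub_distrib, sub_eq_zero, eq_comm]

end Real

namespace Matrix.IsHermitian

variable {n 𝕜 : Type*} [Fintype n] [DecidableEq n] [RCLike 𝕜] {A : Matrix n n 𝕜}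

lemma trace_cfc (hA : A.IsHermitian) (f : ℝ → ℝ) :
    (cfc f A).trace = ∑ i, (f (hA.eigenvalues i) : 𝕜) := by
  rw [hA.cfc_eq, IsHermitian.cfc, Unitary.conjStarAlgAut_apply, trace_mul_cycle,
    Unitary.coe_star_mul_self, one_mul, trace_diagonal]
  rfl

lemma trace_mul_self_eq_sum_eigenvalues_sq (hA : A.IsHermitian) :
    (A * A).trace = ∑ i, ((hA.eigenvalues i ^ 2 : ℝ) : 𝕜) := by
  rw [← sq, ← cfc_pow_id (R := ℝ) A 2 hA.isSelfAdjoint, hA.trace_cfc]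

end Matrix.IsHermitian

namespace SimpleGraph

variable [Fintype V] (G : SimpleGraph V) [DecidableRel G.Adj]

lemma degreeSum_eq_two_mul_card_edgeFinset : degreeSum G = 2 * #G.edgeFinset :=
  G.sum_degrees_eq_twice_card_edges

lemma degreeSum_pos (hE : G.edgeFinset.Nonempty) : 0 < degreeSum G := by
  rw [degreeSum_eq_two_mul_card_edgeFinset]
  exact Nat.mul_pos two_pos hE.card_pos

lemma sum_degree_sq_le : ∑ v, G.degree v ^ 2 ≤ 2 * #G.edgeFinset ^ 2 := by
  calc ∑ v, G.degree v ^ 2 ≤ ∑ v, G.degree v * #G.edgeFinset :=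
        Finset.sum_le_sum fun v _ ↦ by
          rw [sq]; exact Nat.mul_le_mul_left _ (G.degree_le_card_edgeFinset v)
    _ = 2 * #G.edgeFinset ^ 2 := by rw [← Finset.sum_mul, G.sum_degrees_eq_twice_card_edges]; ring

lemma sum_degree_sq_add_degreeSum_eq_sq_iff (hE : G.edgeFinset.Nonempty) :
    ∑ v, G.degree v ^ 2 + degreeSum G = degreeSum G ^ 2 ↔ #G.edgeFinset = 1 := by
  rw [degreeSum_eq_two_mul_card_edgeFinset]
  have hpos := hE.card_pos
  constructor
  · intro h
    nlinarith [G.sum_degree_sq_le]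
  · intro h
    have hsq : ∀ v, G.degree v ^ 2 = G.degree v := fun v ↦ by
      have := h ▸ G.degree_le_card_edgeFinset v
      interval_cases G.degree v <;> rfl
    simp only [hsq, G.sum_degrees_eq_twice_card_edges, h]
    norm_num

variable [DecidableEq V]

lemma trace_lapMatrix (R : Type*) [Ring R] : (G.lapMatrix R).trace = ∑ v, (G.degree v : R) := by
  simp [lapMatrix, trace_sub, degMatrix]

lemma trace_lapMatrix_mul_self (R : Type*) [Ring R] :
    (G.lapMatrix R * G.lapMatrix R).trace =
      ∑ v, (G.degree v : R) ^ 2 + ∑ v, (G.degree v : R) := by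
  have hAD : (G.adjMatrix R * G.degMatrix R).trace = 0 := by
    simp [trace, degMatrix]
  have hDA : (G.degMatrix R * G.adjMatrix R).trace = 0 := by
    simp only [trace, Matrix.diag, degMatrix, diagonal_mul, adjMatrix_apply, G.irrefl]
    simp
  have hAA : (G.adjMatrix R * G.adjMatrix R).trace = ∑ v, (G.degree v : R) := by
    simp only [trace, Matrix.diag, adjMatrix_mul_self_apply_self]
  have hDD : (G.degMatrix R * G.degMatrix R).trace = ∑ v, (G.degree v : R) ^ 2 := by
    simp [degMatrix, sq]
  rw [lapMatrix, sub_mul, mul_sub, mul_sub, trace_sub, trace_sub, trace_sub, hDA, hAD, hAA, hDD]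
  abel

end SimpleGraph

section DensityMatrix

variable [Fintype V] [DecidableEq V] (G : SimpleGraph V) [DecidableRel G.Adj]

lemma posSemidef_densityMatrix : (densityMatrix G).PosSemidef :=
  (G.posSemidef_lapMatrix ℝ).smul (by positivity)

lemma trace_densityMatrix (hE : G.edgeFinset.Nonempty) : (densityMatrix G).trace = 1 := by
  have hd : (degreeSum G : ℝ) ≠ 0 := by exact_mod_cast (G.degreeSum_pos hE).ne'
  rw [densityMatrix, trace_smul, G.trace_lapMatrix, smul_eq_mul, ← Nat.cast_sum]
  exact inv_mul_cancel₀ hd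

lemma trace_densityMatrix_mul_self_eq_one_iff (hE : G.edgeFinset.Nonempty) :
    (densityMatrix G * densityMatrix G).trace = 1 ↔ #G.edgeFinset = 1 := by
  have hd : (degreeSum G : ℝ) ≠ 0 := by exact_mod_cast (G.degreeSum_pos hE).ne'
  rw [densityMatrix, smul_mul_smul, trace_smul, G.trace_lapMatrix_mul_self, smul_eq_mul,
    ← mul_inv, inv_mul_eq_one₀ (mul_self_ne_zero.2 hd), ← sq, eq_comm,
    ← G.sum_degree_sq_add_degreeSum_eq_sq_iff hE]
  simp only [degreeSum]
  exact_mod_cast Iff.rfl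

end DensityMatrix

theorem entropy_nonneg_eq_zero_iff_general [Fintype V] [DecidableEq V]
    (G : SimpleGraph V) [DecidableRel G.Adj]
    (hE : G.edgeFinset.Nonempty) :
    0 ≤ graphEntropy G ∧ (graphEntropy G = 0 ↔ G.edgeFinset.card = 1) := by
  have hρ := posSemidef_densityMatrix G
  set p := hρ.1.eigenvalues
  have h0 : ∀ i ∈ univ, 0 ≤ p i := fun i _ ↦ hρ.eigenvalues_nonneg i
  have hsum : ∑ i, p i = 1 := by
    simpa using hρ.1.trace_eq_sum_eigenvalues.symm.trans (trace_densityMatrix G hE)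
  have h1 : ∀ i ∈ univ, p i ≤ 1 := fun i hi ↦ hsum ▸ single_le_sum h0 hi
  have hsq : ∑ i, p i ^ 2 = (densityMatrix G * densityMatrix G).trace := by
    simpa using hρ.1.trace_mul_self_eq_sum_eigenvalues_sq.symm
  have hS : graphEntropy G = -∑ i, p i * Real.logb 2 (p i) := dif_pos hρ.1
  rw [hS, Real.neg_sum_mul_logb_eq_zero_iff _ one_lt_two h0 h1, hsum, hsq,
    trace_densityMatrix_mul_self_eq_one_iff G hE]
  exact ⟨Real.neg_sum_mul_logb_nonneg _ one_lt_two h0 h1, Iff.rfl⟩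

/-- For a graph `G` on `n ≥ 2` vertices with at least one edge,
`S(G) ≥ 0`, with equality iff `G` has exactly one edge (i.e. `G` is the disjoint
union of `K₂` with `n - 2` isolated vertices). -/
theorem entropy_nonneg_eq_zero_iff [Fintype V] [DecidableEq V]
    (G : SimpleGraph V) [DecidableRel G.Adj]
    (hn : 2 ≤ Fintype.card V) (hE : G.edgeFinset.Nonempty) :
    0 ≤ graphEntropy G ∧ (graphEntropy G = 0 ↔ G.edgeFinset.card = 1) :=
  entropy_nonneg_eq_zero_iff_general G hE
end

section
/- Let G be a simple graph with at least one edge and let G′ = G + {x,y} be the graph obtained from G by adding one new edge {x,y} (so d_{G′} = d_G + 2). Then S(ρ_{G′}) ≥ ((d_{G′} − 2)/d_{G′}) · S(ρ_G). -/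
/-!
Adding the edge `e = {x,y}` adds Laplacians, so `ρ_{G'} = (1 - t) ρ_G + t ρ_e` with
`t = 2 / d_{G'}`. Write `a`, `b` for the diagonals of `ρ_G`, `ρ_e` in an eigenbasis of `ρ_{G'}`;
then the spectrum of `ρ_{G'}` is `(1 - t) a + t b`. With `H = ∑ -x log x`, concavity gives
`H(spec ρ_{G'}) ≥ (1 - t) H(a) + t H(b) ≥ (1 - t) H(a)`, since `b` is a probability vector.
Finally `a` is the image of `spec ρ_G` under the orthostochastic matrix `(U_{ij}²)`, which is
doubly stochastic, so `H(a) ≥ H(spec ρ_G)` by Jensen (Schur concavity of entropy).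
-/

open Finset Matrix

variable {V : Type*}

variable {n : Type*} [Fintype n]

namespace Matrix.PosSemidef

variable {B : Matrix n n ℝ} (hB : B.PosSemidef)
include hB

theorem diag_le_trace (i : n) : B.diag i ≤ B.trace :=
  single_le_sum (f := B.diag) (fun _ _ => hB.diag_nonneg) (mem_univ i)

theorem star_mul_mul (U : Matrix n n ℝ) : (star U * B * U).PosSemidef := by
  simpa only [star_eq_conjTranspose] using hB.conjTranspose_mul_mul_same U

end Matrix.PosSemidef

variable [DecidableEq n]

theorem ConcaveOn.sum_le_sum_map_mulVec {f : ℝ → ℝ} {s : Set ℝ} (hf : ConcaveOn ℝ s f)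
    {S : Matrix n n ℝ} (hS : S ∈ doublyStochastic ℝ n) {p : n → ℝ} (hp : ∀ i, p i ∈ s) :
    ∑ i, f (p i) ≤ ∑ j, f ((S *ᵥ p) j) :=
  calc ∑ i, f (p i) = ∑ i, (∑ j, S j i) * f (p i) := by
        simp [sum_col_of_mem_doublyStochastic hS]
    _ = ∑ j, ∑ i, S j i * f (p i) := by simp_rw [Finset.sum_mul]; exact Finset.sum_comm
    _ ≤ ∑ j, f ((S *ᵥ p) j) := Finset.sum_le_sum fun j _ => by
        simpa [mulVec, dotProduct] using hf.le_map_sum (fun i _ => nonneg_of_mem_doublyStochastic hS)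
          (sum_row_of_mem_doublyStochastic hS j) (fun i _ => hp i)

namespace Matrix

theorem map_sq_mem_doublyStochastic {U : Matrix n n ℝ} (hU : U ∈ unitaryGroup n ℝ) :
    U.map (· ^ 2) ∈ doublyStochastic ℝ n := by
  refine mem_doublyStochastic_iff_sum.2 ⟨fun i j => sq_nonneg _, fun i => ?_, fun j => ?_⟩
  · simpa [mul_apply, one_apply, sq] using congrFun₂ (mem_unitaryGroup_iff.1 hU) i i
  · simpa [mul_apply, one_apply, sq] using congrFun₂ (mem_unitaryGroup_iff'.1 hU) j j

namespace IsHermitian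

variable {A : Matrix n n ℝ} (hA : A.IsHermitian)
include hA

theorem diag_conj_eq_mulVec_eigenvalues {U : Matrix n n ℝ} :
    (star U * A * U).diag = (star U * hA.eigenvectorUnitary).map (· ^ 2) *ᵥ hA.eigenvalues := by
  ext j
  conv_lhs => rw [hA.spectral_theorem]
  simp only [Unitary.conjStarAlgAut_apply, RCLike.ofReal_real_eq_id, Function.id_comp]
  set W : Matrix n n ℝ := (hA.eigenvectorUnitary : Matrix n n ℝ)
  rw [show star U * (W * diagonal hA.eigenvalues * star W) * U
      = (star U * W) * diagonal hA.eigenvalues * star (star U * W) by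
    simp only [star_mul, star_star, Matrix.mul_assoc]]
  rw [diag, mul_apply]
  simp only [mulVec, dotProduct, map_apply, mul_diagonal, star_apply, star_trivial]
  exact Finset.sum_congr rfl fun i _ => by ring

theorem diag_conj_eigenvectorUnitary :
    (star (hA.eigenvectorUnitary : Matrix n n ℝ) * A * hA.eigenvectorUnitary).diag =
      hA.eigenvalues := by
  have := hA.conjStarAlgAut_star_eigenvectorUnitary
  rw [Unitary.conjStarAlgAut_star_apply, RCLike.ofReal_real_eq_id, Function.id_comp] at this
  rw [this, diag_diagonal]

theorem sum_map_eigenvalues_le_sum_map_diag_conj {f : ℝ → ℝ} {s : Set ℝ} (hf : ConcaveOn ℝ s f)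
    (hs : ∀ i, hA.eigenvalues i ∈ s) {U : Matrix n n ℝ} (hU : U ∈ unitaryGroup n ℝ) :
    ∑ i, f (hA.eigenvalues i) ≤ ∑ j, f ((star U * A * U).diag j) := by
  rw [hA.diag_conj_eq_mulVec_eigenvalues]
  exact hf.sum_le_sum_map_mulVec
    (map_sq_mem_doublyStochastic (mul_mem (Unitary.star_mem hU) hA.eigenvectorUnitary.2)) hs

end IsHermitian

theorem trace_star_mul_mul_of_mem_unitaryGroup {U : Matrix n n ℝ} (hU : U ∈ unitaryGroup n ℝ)
    (B : Matrix n n ℝ) : (star U * B * U).trace = B.trace := by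
  rw [trace_mul_cycle, mem_unitaryGroup_iff.1 hU, Matrix.one_mul]

end Matrix

theorem matEntropy_eq_sum_negMulLog {A : Matrix n n ℝ} (hA : A.IsHermitian) :
    matEntropy A = (Real.log 2)⁻¹ * ∑ i, Real.negMulLog (hA.eigenvalues i) := by
  rw [matEntropy, dif_pos hA, mul_sum, ← sum_neg_distrib]
  exact sum_congr rfl fun i _ => by rw [Real.negMulLog, Real.logb]; ring

theorem mul_matEntropy_le_matEntropy_smul_add_smul {A B : Matrix n n ℝ} (hA : A.PosSemidef)
    (hB : B.PosSemidef) (hB1 : B.trace ≤ 1) {s t : ℝ} (hs : 0 ≤ s) (ht : 0 ≤ t) (hst : s + t = 1) :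
    s * matEntropy A ≤ matEntropy (s • A + t • B) := by
  have hσ : (s • A + t • B).PosSemidef := (hA.smul hs).add (hB.smul ht)
  set U : Matrix n n ℝ := (hσ.1.eigenvectorUnitary : Matrix n n ℝ)
  have hU : U ∈ unitaryGroup n ℝ := hσ.1.eigenvectorUnitary.2
  set a := (star U * A * U).diag
  set b := (star U * B * U).diag
  have ha : ∀ j, 0 ≤ a j := fun j => (hA.star_mul_mul U).diag_nonneg
  have hb : ∀ j, b j ∈ Set.Icc 0 1 := fun j =>
    ⟨(hB.star_mul_mul U).diag_nonneg,
      ((hB.star_mul_mul U).diag_le_trace j).trans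
        ((trace_star_mul_mul_of_mem_unitaryGroup hU B).trans_le hB1)⟩
  have hq : ∀ j, hσ.1.eigenvalues j = s * a j + t * b j := fun j => by
    rw [← hσ.1.diag_conj_eigenvectorUnitary]
    simp [U, a, b, Matrix.mul_add, Matrix.add_mul]
  have hschur : ∑ i, Real.negMulLog (hA.1.eigenvalues i) ≤ ∑ j, Real.negMulLog (a j) :=
    hA.1.sum_map_eigenvalues_le_sum_map_diag_conj Real.concaveOn_negMulLog
      (fun i => hA.eigenvalues_nonneg i) hU
  have hjensen : ∀ j, s * Real.negMulLog (a j) + t * Real.negMulLog (b j) ≤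
      Real.negMulLog (hσ.1.eigenvalues j) := fun j => by
    simpa [hq j] using Real.concaveOn_negMulLog.2 (ha j) (hb j).1 hs ht hst
  rw [matEntropy_eq_sum_negMulLog hA.1, matEntropy_eq_sum_negMulLog hσ.1, mul_left_comm]
  gcongr
  calc s * ∑ i, Real.negMulLog (hA.1.eigenvalues i)
      ≤ s * ∑ j, Real.negMulLog (a j) + t * ∑ j, Real.negMulLog (b j) := by
        refine le_add_of_le_of_nonneg (mul_le_mul_of_nonneg_left hschur hs) (mul_nonneg ht ?_)
        exact sum_nonneg fun j _ => Real.negMulLog_nonneg (hb j).1 (hb j).2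
    _ = ∑ j, (s * Real.negMulLog (a j) + t * Real.negMulLog (b j)) := by
        rw [sum_add_distrib, mul_sum, mul_sum]
    _ ≤ ∑ j, Real.negMulLog (hσ.1.eigenvalues j) := sum_le_sum fun j _ => hjensen j

namespace SimpleGraph

variable {G H : SimpleGraph V} [DecidableRel G.Adj] [DecidableRel H.Adj]
  [DecidableRel (G ⊔ H).Adj]

theorem adjMatrix_sup_of_disjoint (R : Type*) [AddZeroClass R] [One R] (h : Disjoint G H) :
    (G ⊔ H).adjMatrix R = G.adjMatrix R + H.adjMatrix R := by
  ext v w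
  have hGH : ¬ (G.Adj v w ∧ H.Adj v w) := fun hvw => h.le_bot (show (G ⊓ H).Adj v w from hvw)
  by_cases hG : G.Adj v w <;> by_cases hH : H.Adj v w <;> simp_all

variable [Fintype V]

theorem degree_sup_of_disjoint (h : Disjoint G H) (v : V) :
    (G ⊔ H).degree v = G.degree v + H.degree v := by
  simpa [add_mulVec, add_mul] using
    congrFun (congrArg (· *ᵥ Function.const V 1) (adjMatrix_sup_of_disjoint ℕ h)) v

theorem lapMatrix_sup_of_disjoint (R : Type*) [AddCommGroupWithOne R] [DecidableEq V]
    (h : Disjoint G H) : (G ⊔ H).lapMatrix R = G.lapMatrix R + H.lapMatrix R := by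
  have hdeg : (G ⊔ H).degMatrix R = G.degMatrix R + H.degMatrix R := by
    simp only [degMatrix, degree_sup_of_disjoint h, Nat.cast_add, ← diagonal_add]
  simp only [lapMatrix, hdeg, adjMatrix_sup_of_disjoint R h]
  abel

theorem trace_lapMatrix_s3 (R : Type*) [AddCommGroupWithOne R] [DecidableEq V] :
    (G.lapMatrix R).trace = degreeSum G := by
  simp [lapMatrix, degMatrix, degreeSum]

theorem degreeSum_sup_of_disjoint (h : Disjoint G H) :
    degreeSum (G ⊔ H) = degreeSum G + degreeSum H := by
  simp only [degreeSum, degree_sup_of_disjoint h, sum_add_distrib]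

variable [DecidableEq V]

theorem degreeSum_edge {x y : V} (hxy : x ≠ y) : degreeSum (edge x y) = 2 := by
  simp [degreeSum, sum_degrees_eq_twice_card_edges, edgeFinset, edgeSet_edge_of_ne hxy]

theorem posSemidef_densityMatrix : (densityMatrix G).PosSemidef :=
  (posSemidef_lapMatrix ℝ G).smul (by positivity)

theorem trace_densityMatrix (hG : degreeSum G ≠ 0) : (densityMatrix G).trace = 1 := by
  rw [densityMatrix, trace_smul, trace_lapMatrix_s3, smul_eq_mul, inv_mul_cancel₀ (by exact_mod_cast hG)]

theorem densityMatrix_sup_of_disjoint (h : Disjoint G H) (hG : degreeSum G ≠ 0)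
    (hH : degreeSum H ≠ 0) :
    densityMatrix (G ⊔ H) = ((degreeSum G : ℝ) / degreeSum (G ⊔ H)) • densityMatrix G +
      ((degreeSum H : ℝ) / degreeSum (G ⊔ H)) • densityMatrix H := by
  have hG' : (degreeSum G : ℝ) ≠ 0 := by exact_mod_cast hG
  have hH' : (degreeSum H : ℝ) ≠ 0 := by exact_mod_cast hH
  simp only [densityMatrix, lapMatrix_sup_of_disjoint ℝ h, smul_smul, smul_add]
  congr 2 <;> field_simp

theorem div_mul_graphEntropy_le_graphEntropy_sup (h : Disjoint G H) (hG : degreeSum G ≠ 0)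
    (hH : degreeSum H ≠ 0) :
    (degreeSum G : ℝ) / degreeSum (G ⊔ H) * graphEntropy G ≤ graphEntropy (G ⊔ H) := by
  rw [graphEntropy, graphEntropy, densityMatrix_sup_of_disjoint h hG hH]
  refine mul_matEntropy_le_matEntropy_smul_add_smul posSemidef_densityMatrix
    posSemidef_densityMatrix (trace_densityMatrix hH).le (by positivity) (by positivity) ?_
  rw [← add_div, degreeSum_sup_of_disjoint h, Nat.cast_add]
  exact div_self (by positivity)

end SimpleGraph

/-- If `G` has at least one edge and `G' = G + {x,y}` is obtained
from `G` by adding one new edge (so `d_{G'} = d_G + 2`), then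
`S(ρ_{G'}) ≥ ((d_{G'} - 2)/d_{G'}) · S(ρ_G)`. -/
theorem entropy_add_edge [Fintype V] [DecidableEq V]
    (G G' : SimpleGraph V) [DecidableRel G.Adj] [DecidableRel G'.Adj]
    (x y : V) (hxy : x ≠ y) (hnadj : ¬ G.Adj x y)
    (hE : G.edgeFinset.Nonempty)
    (hG' : G' = G ⊔ SimpleGraph.fromEdgeSet {s(x, y)}) :
    ((degreeSum G' : ℝ) - 2) / (degreeSum G' : ℝ) * graphEntropy G ≤ graphEntropy G' := by
  change G' = G ⊔ SimpleGraph.edge x y at hG'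
  subst hG'
  have hdisj : Disjoint G (SimpleGraph.edge x y) := G.disjoint_edge.2 hnadj
  have hG : degreeSum G ≠ 0 := by
    rw [degreeSum, G.sum_degrees_eq_twice_card_edges]
    exact mul_ne_zero two_ne_zero hE.card_pos.ne'
  have hsum : degreeSum (G ⊔ SimpleGraph.edge x y) = degreeSum G + 2 := by
    rw [SimpleGraph.degreeSum_sup_of_disjoint hdisj, SimpleGraph.degreeSum_edge hxy]
  convert SimpleGraph.div_mul_graphEntropy_le_graphEntropy_sup hdisj hG
    (SimpleGraph.degreeSum_edge hxy ▸ two_ne_zero) using 2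
  rw [hsum]; push_cast; ring
end

section
/- Let (G_n)_{n≥2} be a sequence of simple graphs, with G_n on n vertices and having at least one edge, and for each n let R(G_n) = (1/n) Σ_{i=1}^n (ν_i/d̄) log₂(ν_i/d̄), where ν_1 ≥ … ≥ ν_n are the eigenvalues of L(G_n) and d̄ = d_{G_n}/n. If lim_{n→∞} R(G_n)/log₂ n = 0, then lim_{n→∞} S(G_n)/log₂(n−1) = 1; that is, S(G_n)/S(K_n) → 1. -/
open Finset Matrix

variable {V : Type*}

/-- The quantity `R(G) = (1/n) ∑ᵢ (νᵢ/d̄) log₂ (νᵢ/d̄)`, where `νᵢ` are the eigenvalues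
of the combinatorial Laplacian `L(G)` and `d̄ = d_G/n` is the average degree over all
`n` vertices (with `0 log₂ 0 = 0`). -/
noncomputable def RG [Fintype V] [DecidableEq V]
    (G : SimpleGraph V) [DecidableRel G.Adj] : ℝ :=
  if h : (G.lapMatrix ℝ).IsHermitian then
    (Fintype.card V : ℝ)⁻¹ * ∑ i : V,
      (h.eigenvalues i / ((degreeSum G : ℝ) / (Fintype.card V : ℝ))) *
        Real.logb 2 (h.eigenvalues i / ((degreeSum G : ℝ) / (Fintype.card V : ℝ)))
  else 0


/-! The eigenvalues of `ρ_G` are `μᵢ = νᵢ / d_G`, which sum to `1`. Since `νᵢ / d̄ = n μᵢ`,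
expanding `log₂ (n μᵢ) = log₂ n + log₂ μᵢ` gives the exact identity `S(G) + R(G) = log₂ n`.
Hence `S(Gₙ) / log₂ (n - 1) = (1 - R(Gₙ) / log₂ n) · (log₂ n / log₂ (n - 1))`, and both factors
tend to `1`. -/

open Filter Topology Polynomial

namespace Matrix.IsHermitian

variable {n 𝕜 : Type*} [Fintype n] [DecidableEq n] [RCLike 𝕜] {A : Matrix n n 𝕜}

lemma charpoly_smul (hA : A.IsHermitian) (c : ℝ) :
    (c • A).charpoly = ∏ i, (X - C ((c * hA.eigenvalues i : ℝ) : 𝕜)) := by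
  conv_lhs => rw [hA.spectral_theorem, Unitary.conjStarAlgAut_apply, ← smul_mul_assoc,
    ← mul_smul_comm, charpoly_mul_comm, ← mul_assoc]
  rw [Unitary.coe_star_mul_self, one_mul, ← diagonal_smul, charpoly_diagonal]
  simp [RCLike.real_smul_eq_coe_mul]

lemma map_eigenvalues_smul (hA : A.IsHermitian) (c : ℝ) (hcA : (c • A).IsHermitian) :
    univ.val.map hcA.eigenvalues = univ.val.map (fun i ↦ c * hA.eigenvalues i) := by
  have h := hcA.roots_charpoly_eq_eigenvalues
  rw [hA.charpoly_smul c, roots_prod _ _ (prod_ne_zero_iff.mpr fun i _ ↦ X_sub_C_ne_zero _)] at h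
  simp only [roots_X_sub_C, Multiset.bind_singleton] at h
  refine Multiset.map_injective (RCLike.ofReal_injective (K := 𝕜)) ?_
  simpa only [Multiset.map_map, Function.comp_def] using h.symm

lemma sum_comp_eigenvalues_smul (hA : A.IsHermitian) (c : ℝ) (hcA : (c • A).IsHermitian)
    (f : ℝ → ℝ) : ∑ i, f (hcA.eigenvalues i) = ∑ i, f (c * hA.eigenvalues i) := by
  have h := congrArg (fun s ↦ (s.map f).sum) (hA.map_eigenvalues_smul c hcA)
  simp only [Multiset.map_map, Function.comp_def] at h
  exact h

end Matrix.IsHermitian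

namespace Real

lemma sum_mul_mul_logb_mul {ι : Type*} (s : Finset ι) (b : ℝ) {N : ℝ} (hN : N ≠ 0)
    (μ : ι → ℝ) :
    ∑ i ∈ s, N * μ i * logb b (N * μ i)
      = N * logb b N * ∑ i ∈ s, μ i + N * ∑ i ∈ s, μ i * logb b (μ i) := by
  rw [mul_sum, mul_sum, ← sum_add_distrib]
  refine sum_congr rfl fun i _ ↦ ?_
  rcases eq_or_ne (μ i) 0 with h | h
  · simp [h]
  · rw [logb_mul hN h]
    ring

lemma tendsto_log_add_div_log (y : ℝ) :
    Tendsto (fun x ↦ log (x + y) / log x) atTop (𝓝 1) := by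
  have h := tendsto_const_nhds (x := (1 : ℝ)).add
    ((tendsto_log_comp_add_sub_log y).div_atTop tendsto_log_atTop)
  rw [add_zero] at h
  refine h.congr' ?_
  filter_upwards [eventually_gt_atTop 1] with x hx
  field_simp [(log_pos hx).ne']
  ring

lemma tendsto_logb_div_logb_sub_one {b : ℝ} (hb : 1 < b) :
    Tendsto (fun x ↦ logb b x / logb b (x - 1)) atTop (𝓝 1) := by
  refine ((tendsto_log_add_div_log 1).comp
    (tendsto_atTop_add_const_right _ (-1) tendsto_id)).congr fun x ↦ ?_
  simp [logb, div_div_div_cancel_right₀ (log_pos hb).ne', sub_eq_add_neg]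

end Real

section Graph

variable [Fintype V] {G : SimpleGraph V} [DecidableRel G.Adj]

lemma degreeSum_pos (hG : G.edgeSet.Nonempty) : 0 < degreeSum G := by
  classical
  have hcard :=
    card_pos.mpr (SimpleGraph.edgeFinset_nonempty.mpr (SimpleGraph.edgeSet_nonempty.mp hG))
  rw [degreeSum, G.sum_degrees_eq_twice_card_edges]
  omega

variable (G) in
lemma trace_lapMatrix_eq_degreeSum (R : Type*) [AddCommGroupWithOne R] [DecidableEq V] :
    (G.lapMatrix R).trace = degreeSum G := by
  simp [SimpleGraph.lapMatrix, trace_sub, SimpleGraph.degMatrix, trace_diagonal, degreeSum]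

theorem graphEntropy_add_RG [DecidableEq V] (hG : G.edgeSet.Nonempty) :
    graphEntropy G + RG G = Real.logb 2 (Fintype.card V) := by
  have hL : (G.lapMatrix ℝ).IsHermitian := (G.posSemidef_lapMatrix ℝ).isHermitian
  have hρ : (densityMatrix G).IsHermitian := hL.smul (IsSelfAdjoint.all _)
  set d : ℝ := (degreeSum G : ℝ) with hd_def
  set N : ℝ := (Fintype.card V : ℝ) with hN_def
  have hd : d ≠ 0 := Nat.cast_ne_zero.mpr (degreeSum_pos hG).ne'
  have hN : N ≠ 0 := by
    obtain ⟨⟨v, -⟩, -⟩ := hG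
    have : Nonempty V := ⟨v⟩
    exact Nat.cast_ne_zero.mpr Fintype.card_ne_zero
  set μ : V → ℝ := fun i ↦ d⁻¹ * hL.eigenvalues i
  have hμ : ∑ i, μ i = 1 := by
    have htrace := hL.trace_eq_sum_eigenvalues
    simp only [RCLike.ofReal_real_eq_id, id] at htrace
    rw [← mul_sum, ← htrace, trace_lapMatrix_eq_degreeSum, inv_mul_cancel₀ hd]
  have hS : graphEntropy G = -∑ i, μ i * Real.logb 2 (μ i) := by
    rw [graphEntropy, matEntropy, dif_pos hρ]
    exact congrArg Neg.neg (hL.sum_comp_eigenvalues_smul d⁻¹ hρ (fun x ↦ x * Real.logb 2 x))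
  have hR : RG G = N⁻¹ * ∑ i, N * μ i * Real.logb 2 (N * μ i) := by
    have hscale : ∀ i, hL.eigenvalues i / (d / N) = N * μ i := fun i ↦ by
      simp only [μ]
      field_simp
    simp only [RG, dif_pos hL, ← hd_def, ← hN_def, hscale]
  rw [hS, hR, Real.sum_mul_mul_logb_mul _ _ hN, hμ]
  field_simp
  ring

end Graph

/-- For a sequence of graphs `Gₙ` on `n` vertices with at least one
edge, if `R(Gₙ)/log₂ n → 0` then `S(Gₙ)/log₂(n-1) → 1`, i.e. `S(Gₙ)/S(Kₙ) → 1`. -/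
theorem entropy_ratio_tendsto_one_of_RG
    (G : (n : ℕ) → SimpleGraph (Fin n)) (hdec : ∀ n, DecidableRel (G n).Adj)
    (hE : ∀ n, 2 ≤ n → (G n).edgeSet.Nonempty)
    (hR : Filter.Tendsto
      (fun n : ℕ => (@RG (Fin n) _ _ (G n) (hdec n)) / Real.logb 2 (n : ℝ))
      Filter.atTop (nhds 0)) :
    Filter.Tendsto
      (fun n : ℕ => (@graphEntropy (Fin n) _ _ (G n) (hdec n)) / Real.logb 2 ((n : ℝ) - 1))
      Filter.atTop (nhds 1) := by
  have hratio := (Real.tendsto_logb_div_logb_sub_one one_lt_two).comp tendsto_natCast_atTop_atTop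
  have hlim := (tendsto_const_nhds (x := (1 : ℝ)).sub hR).mul hratio
  rw [sub_zero, one_mul] at hlim
  refine hlim.congr' ?_
  filter_upwards [eventually_ge_atTop 2] with n hn
  have hlogn : Real.logb 2 n ≠ 0 := (Real.logb_pos one_lt_two (by exact_mod_cast hn)).ne'
  have hS := @graphEntropy_add_RG _ _ (G n) (hdec n) _ (hE n hn)
  rw [Fintype.card_fin] at hS
  rw [Function.comp_apply, eq_sub_of_add_eq hS]
  field_simp
end

section
/- Let G be a simple graph with at least one edge, let ñ be its number of non-isolated vertices, and let d̄_G = d_G/ñ be the average degree over the non-isolated vertices. Then every eigenvalue λ of the density matrix ρ_G satisfies 0 ≤ λ ≤ 1/d̄_G. -/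
open Finset Matrix

variable {V : Type*}

/-! The quadratic form of `L(G)` is `½ ∑_{u ~ v} (x u - x v)²`. Every edge joins two non-isolated
vertices, so this is at most the quadratic form of the complete graph on the `ñ` non-isolated
vertices, `ñ ∑ x² - (∑ x)² ≤ ñ ‖x‖²`. Hence every Laplacian eigenvalue is at most `ñ`, and the
eigenvalues of `ρ_G = L(G)/d_G` lie in `[0, ñ/d_G]`. -/

namespace Finset

theorem sum_sum_sub_sq {ι R : Type*} [CommRing R] (s : Finset ι) (x : ι → R) :
    ∑ i ∈ s, ∑ j ∈ s, (x i - x j) ^ 2 = 2 * (#s * ∑ i ∈ s, x i ^ 2 - (∑ i ∈ s, x i) ^ 2) := by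
  simp only [sub_sq, sum_add_distrib, sum_sub_distrib, sum_const, nsmul_eq_mul, mul_assoc,
    ← mul_sum, ← sum_mul]
  ring

theorem sum_sum_sub_sq_le {ι R : Type*} [CommRing R] [LinearOrder R] [IsStrictOrderedRing R]
    (s : Finset ι) (x : ι → R) :
    ∑ i ∈ s, ∑ j ∈ s, (x i - x j) ^ 2 ≤ 2 * (#s * ∑ i ∈ s, x i ^ 2) := by
  rw [sum_sum_sub_sq]
  nlinarith [sq_nonneg (∑ i ∈ s, x i)]

end Finset

namespace SimpleGraph

variable [Fintype V] (G : SimpleGraph V) [DecidableRel G.Adj]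

theorem sum_adj_sub_sq_le {R : Type*} [Ring R] [LinearOrder R] [IsOrderedRing R] (x : V → R) :
    (∑ i : V, ∑ j : V, if G.Adj i j then (x i - x j) ^ 2 else 0) ≤
      ∑ i ∈ {v | 0 < G.degree v}, ∑ j ∈ {v | 0 < G.degree v}, (x i - x j) ^ 2 := by
  simp_rw [Finset.sum_filter]
  refine Finset.sum_le_sum fun i _ ↦ ?_
  split_ifs with hi
  · refine Finset.sum_le_sum fun j _ ↦ ?_
    split_ifs with hij hj
    · rfl
    · exact absurd ((G.degree_pos_iff_exists_adj _).2 ⟨i, hij.symm⟩) hj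
    · exact sq_nonneg _
    · rfl
  · refine Finset.sum_nonpos fun j _ ↦ ?_
    rw [if_neg fun hij ↦ hi ((G.degree_pos_iff_exists_adj _).2 ⟨j, hij⟩)]

theorem dotProduct_lapMatrix_mulVec_le [DecidableEq V] {R : Type*} [Field R] [LinearOrder R]
    [IsStrictOrderedRing R] (x : V → R) :
    x ⬝ᵥ (G.lapMatrix R *ᵥ x) ≤ #{v | 0 < G.degree v} * (x ⬝ᵥ x) := by
  set W : Finset V := {v | 0 < G.degree v}
  have hW : ∑ v ∈ W, x v ^ 2 ≤ x ⬝ᵥ x := by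
    simpa only [dotProduct, ← sq] using
      Finset.sum_le_sum_of_subset_of_nonneg W.subset_univ fun v _ _ ↦ sq_nonneg (x v)
  rw [← toLinearMap₂'_apply', lapMatrix_toLinearMap₂', div_le_iff₀ two_pos]
  calc _ ≤ ∑ i ∈ W, ∑ j ∈ W, (x i - x j) ^ 2 := G.sum_adj_sub_sq_le x
    _ ≤ 2 * (#W * ∑ v ∈ W, x v ^ 2) := W.sum_sum_sub_sq_le x
    _ ≤ #W * (x ⬝ᵥ x) * 2 := by nlinarith [W.card.cast_nonneg (α := R)]

end SimpleGraph

theorem Matrix.IsHermitian.eigenvalues_le_of_re_dotProduct_mulVec_le {n 𝕜 : Type*} [Fintype n]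
    [DecidableEq n] [RCLike 𝕜] {A : Matrix n n 𝕜} (hA : A.IsHermitian) {c : ℝ}
    (hc : ∀ x : n → 𝕜, RCLike.re (star x ⬝ᵥ (A *ᵥ x)) ≤ c * RCLike.re (star x ⬝ᵥ x)) (i : n) :
    hA.eigenvalues i ≤ c := by
  have hunit : RCLike.re (star ⇑(hA.eigenvectorBasis i) ⬝ᵥ ⇑(hA.eigenvectorBasis i)) = 1 := by
    rw [dotProduct_comm, ← EuclideanSpace.inner_eq_star_dotProduct, inner_self_eq_norm_sq,
      hA.eigenvectorBasis.orthonormal.1 i, one_pow]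
  simpa only [hA.eigenvalues_eq, hunit, mul_one] using hc (hA.eigenvectorBasis i)

theorem posSemidef_densityMatrix_s13 [Fintype V] [DecidableEq V] (G : SimpleGraph V)
    [DecidableRel G.Adj] : (densityMatrix G).PosSemidef :=
  (G.posSemidef_lapMatrix ℝ).smul (inv_nonneg.2 (Nat.cast_nonneg _))


theorem density_eigenvalue_bounds_general [Fintype V] [DecidableEq V]
    (G : SimpleGraph V) [DecidableRel G.Adj]
    (h : (densityMatrix G).IsHermitian) (i : V) :
    0 ≤ h.eigenvalues i ∧
    h.eigenvalues i ≤
      (((Finset.univ.filter fun v : V => 0 < G.degree v).card : ℝ) / (degreeSum G : ℝ)) := by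
  refine ⟨(posSemidef_densityMatrix_s13 G).eigenvalues_nonneg i,
    h.eigenvalues_le_of_re_dotProduct_mulVec_le (fun x ↦ ?_) i⟩
  simp only [RCLike.re_to_real, star_trivial, densityMatrix, smul_mulVec, dotProduct_smul,
    smul_eq_mul, div_eq_inv_mul, mul_assoc]
  exact mul_le_mul_of_nonneg_left (G.dotProduct_lapMatrix_mulVec_le x)
    (inv_nonneg.2 (Nat.cast_nonneg _))

/-- For a graph `G` with at least one edge, with `ñ` non-isolated
vertices and average degree `d̄_G = d_G/ñ` over the non-isolated vertices, every
eigenvalue `λ` of the density matrix `ρ_G` satisfies `0 ≤ λ ≤ 1/d̄_G = ñ/d_G`. -/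
theorem density_eigenvalue_bounds [Fintype V] [DecidableEq V]
    (G : SimpleGraph V) [DecidableRel G.Adj] (hE : G.edgeSet.Nonempty)
    (h : (densityMatrix G).IsHermitian) (i : V) :
    0 ≤ h.eigenvalues i ∧
    h.eigenvalues i ≤
      (((Finset.univ.filter fun v : V => 0 < G.degree v).card : ℝ) / (degreeSum G : ℝ)) :=
  density_eigenvalue_bounds_general G h i
end

section
/- Let (G_n) be any sequence of simple graphs, G_n on n vertices with no isolated vertices, and let ρ̂_{G_n} = 𝓛(G_n)/n, where 𝓛 is the normalized Laplacian. Then lim_{n→∞} S(ρ̂_{G_n})/log₂ n = 1; i.e., the entropy of the normalized-Laplacian density matrix is always asymptotically equal to S(ρ_{K_n}) = log₂(n−1). -/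
open Finset Matrix

variable {V : Type*}

/-- The normalized Laplacian `𝓛(G) = Δ^{-1/2} L(G) Δ^{-1/2}` (with the convention
`[Δ^{-1/2}]_{vv} = 0` when `d(v) = 0`, automatic here since `(√0)⁻¹ = 0`). -/
noncomputable def normalizedLapMatrix [Fintype V] [DecidableEq V]
    (G : SimpleGraph V) [DecidableRel G.Adj] : Matrix V V ℝ :=
  Matrix.diagonal (fun v => (Real.sqrt (G.degree v))⁻¹) * G.lapMatrix ℝ *
    Matrix.diagonal (fun v => (Real.sqrt (G.degree v))⁻¹)

/-!
Without isolated vertices `𝓛(G) = 1 - Δ^{-1/2} A Δ^{-1/2}` is positive semidefinite with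
unit diagonal, so the eigenvalues `μᵢ` of `ρ = 𝓛(G)/n` form a probability vector and
`S(ρ) ≤ log₂ n`. Since `2 - 𝓛(G) = Δ^{-1/2} (Δ + A) Δ^{-1/2}` and the signless Laplacian
`Δ + A` is positive semidefinite, moreover `μᵢ ≤ 2/n`, whence
`S(ρ) = ∑ μᵢ log₂ (1/μᵢ) ≥ log₂ (n/2) = log₂ n - 1`. Hence `S(ρ)/log₂ n` is squeezed
between `1 - 1/log₂ n` and `1`.
-/

namespace Real

theorem sum_negMulLog_le_log_card {ι : Type*} [Fintype ι] {p : ι → ℝ}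
    (hp₀ : ∀ i, 0 ≤ p i) (hp₁ : ∑ i, p i = 1) :
    ∑ i, negMulLog (p i) ≤ log (Fintype.card ι) := by
  have : Nonempty ι := by
    by_contra h
    simp [not_nonempty_iff.mp h] at hp₁
  have hN : (0 : ℝ) < Fintype.card ι := by exact_mod_cast Fintype.card_pos
  have jensen := concaveOn_negMulLog.le_map_sum (t := univ)
    (w := fun _ ↦ (Fintype.card ι : ℝ)⁻¹) (p := p) (by simp) (by simp [hN.ne'])
    (fun i _ ↦ hp₀ i)
  simp only [smul_eq_mul, ← mul_sum, hp₁, mul_one] at jensen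
  rw [negMulLog, log_inv] at jensen
  rw [← mul_le_mul_iff_of_pos_left (inv_pos.mpr hN)]
  linarith

theorem neg_log_le_sum_negMulLog {ι : Type*} [Fintype ι] {p : ι → ℝ} {c : ℝ}
    (hp₀ : ∀ i, 0 ≤ p i) (hp₁ : ∑ i, p i = 1) (hpc : ∀ i, p i ≤ c) :
    -log c ≤ ∑ i, negMulLog (p i) := by
  calc -log c = ∑ i, p i * -log c := by rw [← sum_mul, hp₁, one_mul]
    _ ≤ ∑ i, negMulLog (p i) := sum_le_sum fun i _ ↦ by
      rcases (hp₀ i).eq_or_lt with h | h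
      · simp [← h]
      · rw [negMulLog, neg_mul, mul_neg, neg_le_neg_iff]
        exact mul_le_mul_of_nonneg_left (log_le_log h (hpc i)) h.le

end Real

namespace Matrix.IsHermitian

open scoped ComplexOrder in
theorem eigenvalues_le_of_posSemidef_sub {𝕜 n : Type*} [RCLike 𝕜] [Fintype n]
    [DecidableEq n] {A : Matrix n n 𝕜} (hA : A.IsHermitian) {c : ℝ}
    (h : (c • 1 - A).PosSemidef) (i : n) : hA.eigenvalues i ≤ c := by
  have hunit : star ⇑(hA.eigenvectorBasis i) ⬝ᵥ ⇑(hA.eigenvectorBasis i) = 1 := by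
    rw [dotProduct_comm, ← EuclideanSpace.inner_eq_star_dotProduct, inner_self_eq_norm_sq_to_K,
      hA.eigenvectorBasis.orthonormal.1 i]
    simp
  have := h.re_dotProduct_nonneg (hA.eigenvectorBasis i)
  rw [sub_mulVec, dotProduct_sub, smul_mulVec, one_mulVec, dotProduct_smul, hunit, map_sub,
    ← hA.eigenvalues_eq i, RCLike.smul_re, RCLike.one_re] at this
  linarith

theorem sum_eigenvalues_eq_trace {n : Type*} [Fintype n] [DecidableEq n] {A : Matrix n n ℝ}
    (hA : A.IsHermitian) : ∑ i, hA.eigenvalues i = A.trace := by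
  simp [hA.trace_eq_sum_eigenvalues]

end Matrix.IsHermitian

section Entropy

open Real

variable [Fintype V] [DecidableEq V] {ρ : Matrix V V ℝ}

theorem matEntropy_eq_sum_negMulLog_s14 (hρ : ρ.IsHermitian) :
    matEntropy ρ = (∑ i, negMulLog (hρ.eigenvalues i)) / log 2 := by
  simp only [matEntropy, dif_pos hρ, negMulLog, logb, sum_div, ← sum_neg_distrib]
  congr! 1 with i
  ring

theorem matEntropy_le_logb_card (hρ : ρ.PosSemidef) (htr : ρ.trace = 1) :
    matEntropy ρ ≤ logb 2 (Fintype.card V) := by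
  rw [matEntropy_eq_sum_negMulLog_s14 hρ.1, logb]
  gcongr
  exact sum_negMulLog_le_log_card hρ.eigenvalues_nonneg (hρ.1.sum_eigenvalues_eq_trace.trans htr)

theorem neg_logb_le_matEntropy (hρ : ρ.PosSemidef) (htr : ρ.trace = 1) {c : ℝ}
    (hc : (c • 1 - ρ).PosSemidef) : -logb 2 c ≤ matEntropy ρ := by
  rw [matEntropy_eq_sum_negMulLog_s14 hρ.1, logb, ← neg_div]
  gcongr
  exact neg_log_le_sum_negMulLog hρ.eigenvalues_nonneg (hρ.1.sum_eigenvalues_eq_trace.trans htr)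
    (hρ.1.eigenvalues_le_of_posSemidef_sub hc)

end Entropy

namespace SimpleGraph

variable [Fintype V] [DecidableEq V] (G : SimpleGraph V) [DecidableRel G.Adj]

def signlessLapMatrix (R : Type*) [AddMonoidWithOne R] : Matrix V V R :=
  G.degMatrix R + G.adjMatrix R

theorem dotProduct_signlessLapMatrix_mulVec {R : Type*} [Field R] [CharZero R] (x : V → R) :
    x ⬝ᵥ (G.signlessLapMatrix R *ᵥ x) =
      (∑ i, ∑ j, if G.Adj i j then (x i + x j) ^ 2 else 0) / 2 := by
  simp_rw [signlessLapMatrix, add_mulVec, dotProduct_add, dotProduct_mulVec_degMatrix,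
    dotProduct_mulVec_adjMatrix, ← sum_add_distrib, degree_eq_sum_if_adj, sum_mul, ite_mul,
    one_mul, zero_mul, ← sum_add_distrib, ite_add_ite, add_zero]
  -- halve the degree term and swap the order of summation in one half:
  -- each edge then contributes `(x i + x j)²`
  rw [← add_self_div_two (∑ i, ∑ j, _)]
  conv_lhs => enter [1, 2, 2, i, 2, j]; rw [if_congr (G.adj_comm i j) rfl rfl]
  conv_lhs => enter [1, 2]; rw [sum_comm]
  simp_rw [← sum_add_distrib, ite_add_ite]
  congr 2 with i
  congr 2 with j
  ring_nf

theorem posSemidef_signlessLapMatrix (R : Type*) [Field R] [LinearOrder R] [IsStrictOrderedRing R]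
    [StarRing R] [TrivialStar R] : (G.signlessLapMatrix R).PosSemidef := by
  refine .of_dotProduct_mulVec_nonneg ?_ fun x ↦ ?_
  · rw [IsHermitian, conjTranspose_eq_transpose_of_trivial, signlessLapMatrix, transpose_add,
      (G.isSymm_degMatrix R).eq, G.isSymm_adjMatrix.eq]
  · rw [star_trivial, dotProduct_signlessLapMatrix_mulVec]
    positivity

noncomputable def invSqrtDegMatrix : Matrix V V ℝ :=
  diagonal fun v ↦ (√(G.degree v))⁻¹

theorem normalizedLapMatrix_eq :
    normalizedLapMatrix G = G.invSqrtDegMatrix * G.lapMatrix ℝ * G.invSqrtDegMatrix :=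
  rfl

theorem conjTranspose_invSqrtDegMatrix : G.invSqrtDegMatrixᴴ = G.invSqrtDegMatrix := by
  simp [invSqrtDegMatrix]

theorem posSemidef_normalizedLapMatrix : (normalizedLapMatrix G).PosSemidef := by
  have := (posSemidef_lapMatrix ℝ G).conjTranspose_mul_mul_same G.invSqrtDegMatrix
  rwa [conjTranspose_invSqrtDegMatrix] at this

variable {G}

theorem invSqrtDegMatrix_mul_degMatrix_mul_invSqrtDegMatrix (hG : ∀ v, G.degree v ≠ 0) :
    G.invSqrtDegMatrix * G.degMatrix ℝ * G.invSqrtDegMatrix = 1 := by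
  rw [invSqrtDegMatrix, degMatrix, diagonal_mul_diagonal, diagonal_mul_diagonal, ← diagonal_one]
  congr with v
  rw [mul_right_comm, ← mul_inv, Real.mul_self_sqrt (Nat.cast_nonneg _),
    inv_mul_cancel₀ (Nat.cast_ne_zero.mpr (hG v))]

theorem normalizedLapMatrix_eq_one_sub (hG : ∀ v, G.degree v ≠ 0) :
    normalizedLapMatrix G = 1 - G.invSqrtDegMatrix * G.adjMatrix ℝ * G.invSqrtDegMatrix := by
  rw [normalizedLapMatrix_eq, lapMatrix, mul_sub, sub_mul,
    invSqrtDegMatrix_mul_degMatrix_mul_invSqrtDegMatrix hG]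

theorem trace_normalizedLapMatrix (hG : ∀ v, G.degree v ≠ 0) :
    (normalizedLapMatrix G).trace = Fintype.card V := by
  have hdiag : (G.invSqrtDegMatrix * G.adjMatrix ℝ * G.invSqrtDegMatrix).trace = 0 := by
    simp only [invSqrtDegMatrix, trace, diag_apply, mul_diagonal, diagonal_mul, adjMatrix_apply,
      G.irrefl, if_false, mul_zero, zero_mul, sum_const_zero]
  rw [normalizedLapMatrix_eq_one_sub hG, trace_sub, hdiag, trace_one, sub_zero]

theorem posSemidef_two_smul_one_sub_normalizedLapMatrix (hG : ∀ v, G.degree v ≠ 0) :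
    ((2 : ℝ) • 1 - normalizedLapMatrix G).PosSemidef := by
  have h : (2 : ℝ) • 1 - normalizedLapMatrix G =
      G.invSqrtDegMatrixᴴ * G.signlessLapMatrix ℝ * G.invSqrtDegMatrix := by
    rw [normalizedLapMatrix_eq_one_sub hG, conjTranspose_invSqrtDegMatrix, signlessLapMatrix,
      mul_add, add_mul, invSqrtDegMatrix_mul_degMatrix_mul_invSqrtDegMatrix hG, two_smul]
    abel
  rw [h]
  exact (posSemidef_signlessLapMatrix G ℝ).conjTranspose_mul_mul_same _

end SimpleGraph

section NormalizedLaplacianEntropy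

open Real SimpleGraph

variable [Fintype V] [DecidableEq V] [Nonempty V] {G : SimpleGraph V} [DecidableRel G.Adj]

theorem trace_inv_card_smul_normalizedLapMatrix (hG : ∀ v, G.degree v ≠ 0) :
    ((Fintype.card V : ℝ)⁻¹ • normalizedLapMatrix G).trace = 1 := by
  rw [trace_smul, trace_normalizedLapMatrix hG, smul_eq_mul,
    inv_mul_cancel₀ (Nat.cast_ne_zero.mpr Fintype.card_ne_zero)]

theorem matEntropy_inv_card_smul_normalizedLapMatrix_le (hG : ∀ v, G.degree v ≠ 0) :
    matEntropy ((Fintype.card V : ℝ)⁻¹ • normalizedLapMatrix G) ≤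
      logb 2 (Fintype.card V) :=
  matEntropy_le_logb_card ((posSemidef_normalizedLapMatrix G).smul (by positivity))
    (trace_inv_card_smul_normalizedLapMatrix hG)

theorem logb_card_sub_one_le_matEntropy_inv_card_smul_normalizedLapMatrix
    (hG : ∀ v, G.degree v ≠ 0) :
    logb 2 (Fintype.card V) - 1 ≤
      matEntropy ((Fintype.card V : ℝ)⁻¹ • normalizedLapMatrix G) := by
  have hN : (Fintype.card V : ℝ) ≠ 0 := Nat.cast_ne_zero.mpr Fintype.card_ne_zero
  have hbound : ((2 / Fintype.card V : ℝ) • 1 -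
      (Fintype.card V : ℝ)⁻¹ • normalizedLapMatrix G).PosSemidef := by
    rw [div_eq_inv_mul, mul_smul, ← smul_sub]
    exact (posSemidef_two_smul_one_sub_normalizedLapMatrix hG).smul (by positivity)
  calc logb 2 (Fintype.card V) - 1 = -logb 2 (2 / Fintype.card V) := by
        rw [logb_div two_ne_zero hN, logb_self_eq_one one_lt_two]
        ring
    _ ≤ _ := neg_logb_le_matEntropy ((posSemidef_normalizedLapMatrix G).smul (by positivity))
        (trace_inv_card_smul_normalizedLapMatrix hG) hbound

end NormalizedLaplacianEntropy

theorem Filter.Tendsto.div_of_sub_one_le_of_le {α : Type*} {l : Filter α} {f g : α → ℝ}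
    (hg : Tendsto g l atTop) (hlow : ∀ᶠ x in l, g x - 1 ≤ f x)
    (hup : ∀ᶠ x in l, f x ≤ g x) :
    Tendsto (fun x ↦ f x / g x) l (nhds 1) := by
  have hlim : Tendsto (fun x ↦ 1 - (g x)⁻¹) l (nhds 1) := by
    simpa using tendsto_const_nhds.sub hg.inv_tendsto_atTop
  refine tendsto_of_tendsto_of_tendsto_of_le_of_le' hlim tendsto_const_nhds ?_ ?_
  · filter_upwards [hlow, hg.eventually_gt_atTop 0] with x hx hpos
    rw [le_div_iff₀ hpos, sub_mul, inv_mul_cancel₀ hpos.ne', one_mul]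
    exact hx
  · filter_upwards [hup, hg.eventually_gt_atTop 0] with x hx hpos
    exact (div_le_one hpos).mpr hx

/-- For any sequence of graphs `Gₙ` on `n` vertices without isolated
vertices, the entropy of the density matrix `ρ̂_{Gₙ} = 𝓛(Gₙ)/n` built from the
normalized Laplacian satisfies `S(ρ̂_{Gₙ})/log₂ n → 1`, i.e. it is asymptotically
equal to `S(ρ_{Kₙ}) = log₂(n-1)`. -/
theorem normalized_entropy_ratio_tendsto_one
    (G : (n : ℕ) → SimpleGraph (Fin n)) (hdec : ∀ n, DecidableRel (G n).Adj)
    (hiso : ∀ n, 2 ≤ n → ∀ v : Fin n, ∃ u, (G n).Adj v u) :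
    Filter.Tendsto
      (fun n : ℕ =>
        matEntropy ((n : ℝ)⁻¹ • @normalizedLapMatrix (Fin n) _ _ (G n) (hdec n))
          / Real.logb 2 (n : ℝ))
      Filter.atTop (nhds 1) := by
  have hdeg : ∀ n, 2 ≤ n → ∀ v : Fin n, (G n).degree v ≠ 0 := fun n hn v ↦
    (SimpleGraph.degree_pos_iff_exists_adj _ v).mpr (hiso n hn v) |>.ne'
  refine Filter.Tendsto.div_of_sub_one_le_of_le
    ((Real.tendsto_logb_atTop one_lt_two).comp tendsto_natCast_atTop_atTop) ?_ ?_
  all_goals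
    filter_upwards [Filter.eventually_ge_atTop 2] with n hn
    have : Nonempty (Fin n) := ⟨⟨0, by omega⟩⟩
  · simpa using logb_card_sub_one_le_matEntropy_inv_card_smul_normalizedLapMatrix (hdeg n hn)
  · simpa using matEntropy_inv_card_smul_normalizedLapMatrix_le (hdeg n hn)
end
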